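/- Let M be a monoid satisfying both x·s·x·t = x·s·x·t·x and (x·y)² = x²·y² for all x, y, s, t ∈ M. Let w be a word over an alphabet A in which every letter that occurs at all occurs at least twice. Then for every f : A → M, the evaluation of w in M equals the evaluation of ini²(w), where ini²(w) is obtained from ini(w) by replacing each letter x by x². -/

import Mathlib

/-! The identity `x s x t = x s x t x` says that a product in which `x` already occurs twice
absorbs every later occurrence of `x`. As each letter occurs twice in `w`, the value of `w`
absorbs its own value, so it is idempotent. By `(x y)² = x² y²`, the square of the value of `w`
is the value of `w` with every letter doubled; in that word the first occurrence of each letter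
is already a square `x x`, so all its later occurrences may be deleted, which leaves `ini²(w)`. -/

/-- `ini w` is the word obtained from `w` by retaining only the first
occurrence of each letter. -/
def ini {A : Type} [DecidableEq A] : List A → List A
  | [] => []
  | a :: l => a :: ini (l.filter (· ≠ a))
termination_by w => w.length
decreasing_by
  simp only [List.length_cons]
  exact Nat.lt_succ_of_le (by
    simp only [List.length_unattach]
    exact (List.length_filter_le _ _).trans (le_of_eq List.length_attach))

/-- `iniSq w` is the word `ini²(w)`, obtained from `ini w` by replacing each
letter `x` by `xx`. -/
def iniSq {A : Type} [DecidableEq A] (w : List A) : List A :=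
  (ini w).flatMap (fun a => [a, a])

local infixl:50 " ∈+ " => List.Duplicate

namespace List

theorem Duplicate.map {α β : Type*} (f : α → β) {l : List α} {x : α} (hx : x ∈+ l) :
    f x ∈+ l.map f := by
  induction hx with
  | cons_mem hx => exact Mem.duplicate_cons_self (mem_map_of_mem hx)
  | cons_duplicate _ ih => exact ih.duplicate_cons _

variable {M : Type*} [Monoid M]

theorem prod_mul_of_duplicate (h1 : ∀ x s t : M, x * s * x * t = x * s * x * t * x)
    {l : List M} {x : M} (hx : x ∈+ l) : l.prod * x = l.prod := by
  induction hx with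
  | cons_mem hx =>
    obtain ⟨s, t, rfl⟩ := append_of_mem hx
    simpa [mul_assoc] using (h1 x s.prod t.prod).symm
  | cons_duplicate _ ih => rw [prod_cons, mul_assoc, ih]

theorem prod_mul_prod_of_forall_duplicate (h1 : ∀ x s t : M, x * s * x * t = x * s * x * t * x)
    {l r : List M} (hr : ∀ x ∈ r, x ∈+ l) : l.prod * r.prod = l.prod := by
  induction r with
  | nil => simp
  | cons x r ih =>
    rw [prod_cons, ← mul_assoc, prod_mul_of_duplicate h1 (hr x mem_cons_self),
      ih fun y hy => hr y (mem_cons_of_mem x hy)]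

theorem prod_sq (h2 : ∀ x y : M, (x * y) ^ 2 = x ^ 2 * y ^ 2) (l : List M) :
    l.prod ^ 2 = (l.map (· ^ 2)).prod := by
  induction l with
  | nil => simp
  | cons x l ih => rw [prod_cons, h2, ih, map_cons, prod_cons]

variable {A : Type}

theorem filter_flatMap_pair (p : A → Bool) (l : List A) :
    (l.flatMap fun a => [a, a]).filter p = (l.filter p).flatMap fun a => [a, a] := by
  induction l with
  | nil => rfl
  | cons a l ih => by_cases ha : p a <;> simp [ha, ih]

theorem prod_map_flatMap_pair (f : A → M) (l : List A) :
    ((l.flatMap fun a => [a, a]).map f).prod = (l.map fun a => f a ^ 2).prod := by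
  induction l with
  | nil => rfl
  | cons a l ih => simp [ih, sq, mul_assoc]

theorem prod_map_append_filter_ne [DecidableEq A]
    (h1 : ∀ x s t : M, x * s * x * t = x * s * x * t * x)
    (f : A → M) {a : A} {P : List A} (hP : a ∈+ P) (Q : List A) :
    ((P ++ Q).map f).prod = ((P ++ Q.filter (· ≠ a)).map f).prod := by
  induction Q generalizing P with
  | nil => rfl
  | cons c Q ih =>
    by_cases hc : c = a
    · subst hc
      have hdel : ((P ++ c :: Q).map f).prod = ((P ++ Q).map f).prod := by
        simp only [map_append, map_cons, prod_append, prod_cons, ← mul_assoc,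
          prod_mul_of_duplicate h1 (hP.map f)]
      rw [hdel, filter_cons_of_neg (by simp)]
      exact ih hP
    · simpa [hc] using ih (hP.mono_sublist (sublist_append_left P [c]))

end List

open List

theorem prod_map_append_flatMap_pair_ini {A : Type} [DecidableEq A] {M : Type*} [Monoid M]
    (h1 : ∀ x s t : M, x * s * x * t = x * s * x * t * x) (f : A → M) (P : List A) :
    ∀ w : List A, ((P ++ w.flatMap fun a => [a, a]).map f).prod
      = ((P ++ (ini w).flatMap fun a => [a, a]).map f).prod
  | [] => by rw [ini]
  | a :: l => by
    have hdup : a ∈+ P ++ [a, a] :=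
      (Mem.duplicate_cons_self mem_cons_self).mono_sublist (sublist_append_right P _)
    have hdel := prod_map_append_filter_ne h1 f hdup (l.flatMap fun a => [a, a])
    rw [filter_flatMap_pair, prod_map_append_flatMap_pair_ini h1 f _ (l.filter (· ≠ a))] at hdel
    simpa [ini] using hdel
termination_by w => w.length
decreasing_by exact Nat.lt_succ_of_le (length_filter_le _ _)

theorem stmt4 {A : Type} [DecidableEq A] {M : Type*} [Monoid M]
    (h1 : ∀ x s t : M, x * s * x * t = x * s * x * t * x)
    (h2 : ∀ x y : M, (x * y) ^ 2 = x ^ 2 * y ^ 2)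
    (w : List A) (hw : ∀ a ∈ w, 2 ≤ w.count a) (f : A → M) :
    (w.map f).prod = ((iniSq w).map f).prod := by
  have hdup : ∀ x ∈ w.map f, x ∈+ w.map f :=
    forall_mem_map.2 fun a ha => (duplicate_iff_two_le_count.mpr (hw a ha)).map f
  calc (w.map f).prod = (w.map f).prod ^ 2 := by
        rw [sq, prod_mul_prod_of_forall_duplicate h1 hdup]
    _ = ((w.flatMap fun a => [a, a]).map f).prod := by
        rw [prod_sq h2, prod_map_flatMap_pair, map_map]; rfl
    _ = ((iniSq w).map f).prod := by
        simpa [iniSq] using prod_map_append_flatMap_pair_ini h1 f [] w
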